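/- Any two distinct switching flows for the same (G, o, d) have different total sums, provided one of them is the run profile; more precisely, any switching flow distinct from the run profile has strictly larger total sum Σ_e x(e). -/

import Mathlib

open scoped Classical

/-- A switch graph: every vertex has an even successor `s0 v` and an odd successor `s1 v`. -/
structure SwitchGraph (V : Type) where
  s0 : V → V
  s1 : V → V

namespace SwitchGraph

variable {V : Type}

/-- The successor of `v` along the edge of parity `b` (`false` = even, `true` = odd). -/
def succ (G : SwitchGraph V) (v : V) (b : Bool) : V :=
  if b then G.s1 v else G.s0 v

/-- One step of the run: move to the currently active successor and flip the switch. -/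
def step [DecidableEq V] (G : SwitchGraph V) (p : V × (V → Bool)) : V × (V → Bool) :=
  (G.succ p.1 (p.2 p.1), Function.update p.2 p.1 (!p.2 p.1))

/-- The state of the run after `n` steps, starting at `o` with all switches even,
stopping (freezing) upon reaching `d`. -/
def run [DecidableEq V] (G : SwitchGraph V) (o d : V) (n : ℕ) : V × (V → Bool) :=
  (fun p => if p.1 = d then p else G.step p)^[n] (o, fun _ => false)

/-- The run from `o` terminates at `d`. -/
def Terminates [DecidableEq V] (G : SwitchGraph V) (o d : V) : Prop :=
  ∃ n, (G.run o d n).1 = d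

/-- Number of traversals of the outgoing edge of `v` of parity `b` during
the first `N` steps of the run. -/
def traversals [DecidableEq V] (G : SwitchGraph V) (o d : V) (N : ℕ) (v : V) (b : Bool) : ℕ :=
  ((Finset.range N).filter
    (fun n => (G.run o d n).1 = v ∧ v ≠ d ∧ (G.run o d n).2 v = b)).card

/-- Total weight on edges leaving `v`. -/
def outflow {M : Type} [AddCommMonoid M] (x : V → Bool → M) (v : V) : M :=
  x v false + x v true

/-- Total weight on edges entering `v`. -/
def inflow [Fintype V] [DecidableEq V] (G : SwitchGraph V) {M : Type} [AddCommMonoid M]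
    (x : V → Bool → M) (v : V) : M :=
  ∑ u : V, ∑ b : Bool, if G.succ u b = v then x u b else 0

/-- A switching flow: flow conservation of value 1 from `o` to `d`, together with the
balancing condition `x v true ≤ x v false ≤ x v true + 1` at every vertex. -/
def IsSwitchingFlow [Fintype V] [DecidableEq V] (G : SwitchGraph V) (o d : V)
    (x : V → Bool → ℕ) : Prop :=
  (∀ v, outflow x v + (if v = d then 1 else 0) = G.inflow x v + (if v = o then 1 else 0)) ∧
  (∀ v, x v true ≤ x v false ∧ x v false ≤ x v true + 1)

/-- The edge relation of the underlying directed graph `(V, E)`. -/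
def stepRel (G : SwitchGraph V) (a b : V) : Prop :=
  G.s0 a = b ∨ G.s1 a = b

/-- A dead end: a vertex with no directed path to `d` in `(V, E)`. -/
def DeadEnd (G : SwitchGraph V) (d w : V) : Prop :=
  ¬ Relation.ReflTransGen G.stepRel w d

/-- There is a directed walk of length `k` from `w` to `d` in `(V, E)`. -/
def Chain (G : SwitchGraph V) (w d : V) (k : ℕ) : Prop :=
  ∃ f : ℕ → V, f 0 = w ∧ f k = d ∧ ∀ i < k, G.stepRel (f i) (f (i + 1))

end SwitchGraph

open SwitchGraph

/-! Every switching flow `x` dominates the run profile, which gives the strict inequality as soon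
as `x` differs from it. Along the run, the profile `Tₙ` of the first `n` steps is a flow from `o`
to the current position, and the switch at `v` records `Tₙ(v,0) - Tₙ(v,1) ∈ {0, 1}`. If step `n`
left `v ≠ d` along an edge on which `Tₙ` already equals `x`, balancing would make `x` and `Tₙ`
agree on both edges out of `v`, and conservation at `v` would force the inflow of `Tₙ` into `v`
to exceed that of `x`, contradicting `Tₙ ≤ x`. -/

theorem Fintype.sum_sum_lt_sum_sum {ι κ M : Type*} [Fintype ι] [Fintype κ] [AddCommMonoid M]
    [PartialOrder M] [IsOrderedCancelAddMonoid M] {f g : ι → κ → M} (h : f < g) :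
    ∑ i, ∑ j, f i j < ∑ i, ∑ j, g i j := by
  obtain ⟨hle, i, hi⟩ := Pi.lt_def.1 h
  exact Fintype.sum_strictMono
    (Pi.lt_def.2 ⟨fun i => Fintype.sum_mono (hle i), i, Fintype.sum_strictMono hi⟩)

namespace SwitchGraph

variable {V : Type}

def edgeIndicator [DecidableEq V] (u : V) (b : Bool) : V → Bool → ℕ :=
  fun w c => if w = u ∧ c = b then 1 else 0

section Flow

variable {M : Type} [AddCommMonoid M]

lemma outflow_add (y z : V → Bool → M) (v : V) :
    outflow (y + z) v = outflow y v + outflow z v := by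
  simp only [outflow, Pi.add_apply]
  abel

lemma outflow_edgeIndicator [DecidableEq V] (u : V) (b : Bool) (v : V) :
    outflow (edgeIndicator u b) v = if u = v then 1 else 0 := by
  cases b <;> by_cases h : u = v <;> simp [outflow, edgeIndicator, h, eq_comm]

lemma outflow_eq_of_le_of_eq_active {x y : V → Bool → ℕ} {v : V} {s : Bool}
    (hbal : x v true ≤ x v false ∧ x v false ≤ x v true + 1) (hle : ∀ b, y v b ≤ x v b)
    (hy : y v false = y v true + s.toNat) (hs : x v s = y v s) :
    outflow x v = outflow y v := by
  have := hle false
  have := hle true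
  cases s <;> simp only [outflow, Bool.toNat_false, Bool.toNat_true] at * <;> omega

variable [Fintype V] [DecidableEq V] (G : SwitchGraph V)

lemma inflow_add (y z : V → Bool → M) (v : V) :
    G.inflow (y + z) v = G.inflow y v + G.inflow z v := by
  simp only [inflow, Pi.add_apply, ite_add_zero, Finset.sum_add_distrib]

lemma inflow_edgeIndicator (u : V) (b : Bool) (v : V) :
    G.inflow (edgeIndicator u b) v = if G.succ u b = v then 1 else 0 := by
  rw [inflow, Finset.sum_eq_single u, Finset.sum_eq_single b] <;> simp_all [edgeIndicator]

lemma inflow_mono [PartialOrder M] [IsOrderedAddMonoid M] {y z : V → Bool → M} (h : y ≤ z)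
    (v : V) : G.inflow y v ≤ G.inflow z v :=
  Finset.sum_le_sum fun u _ => Finset.sum_le_sum fun b _ => by
    split
    · exact h u b
    · rfl

end Flow

section Run

variable [DecidableEq V] (G : SwitchGraph V) (o d : V) (n : ℕ)

lemma run_zero : G.run o d 0 = (o, fun _ => false) := rfl

lemma run_succ_of_eq (h : (G.run o d n).1 = d) : G.run o d (n + 1) = G.run o d n := by
  rw [run, Function.iterate_succ_apply', ← run, if_pos h]

lemma run_succ_of_ne (h : (G.run o d n).1 ≠ d) : G.run o d (n + 1) = G.step (G.run o d n) := by
  rw [run, Function.iterate_succ_apply', ← run, if_neg h]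

lemma step_fst (p : V × (V → Bool)) : (G.step p).1 = G.succ p.1 (p.2 p.1) := rfl

lemma traversals_zero : G.traversals o d 0 = 0 := rfl

lemma traversals_succ_of_eq (h : (G.run o d n).1 = d) :
    G.traversals o d (n + 1) = G.traversals o d n := by
  ext v b
  simp only [traversals, Finset.range_add_one, Finset.filter_insert]
  rw [if_neg]
  rintro ⟨rfl, hv, -⟩
  exact hv h

lemma traversals_succ_of_ne (h : (G.run o d n).1 ≠ d) :
    G.traversals o d (n + 1) = G.traversals o d n +
      edgeIndicator (G.run o d n).1 ((G.run o d n).2 (G.run o d n).1) := by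
  ext v b
  simp only [traversals, Finset.range_add_one, Finset.filter_insert, Pi.add_apply, edgeIndicator]
  by_cases hv : (G.run o d n).1 = v ∧ (G.run o d n).2 v = b
  · obtain ⟨rfl, rfl⟩ := hv
    rw [if_pos ⟨rfl, h, rfl⟩, if_pos ⟨rfl, rfl⟩, Finset.card_insert_of_notMem (by simp)]
  · rw [if_neg (by tauto), if_neg (by rintro ⟨rfl, rfl⟩; tauto)]
    rfl

lemma traversals_false_eq (v : V) :
    G.traversals o d n v false = G.traversals o d n v true + ((G.run o d n).2 v).toNat := by
  induction n with
  | zero => rfl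
  | succ n ih =>
    by_cases hd : (G.run o d n).1 = d
    · rwa [traversals_succ_of_eq G o d n hd, run_succ_of_eq G o d n hd]
    rw [traversals_succ_of_ne G o d n hd, run_succ_of_ne G o d n hd]
    by_cases hv : (G.run o d n).1 = v
    · subst hv
      cases hs : (G.run o d n).2 (G.run o d n).1 <;>
        simp_all [step, edgeIndicator]
    · simpa [step, edgeIndicator, Function.update_of_ne (Ne.symm hv), Ne.symm hv] using ih

end Run

section Conservation

variable [Fintype V] [DecidableEq V] (G : SwitchGraph V) (o d : V)

lemma traversals_flow_conservation (n : ℕ) (v : V) :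
    outflow (G.traversals o d n) v + (if (G.run o d n).1 = v then 1 else 0) =
      G.inflow (G.traversals o d n) v + (if v = o then 1 else 0) := by
  induction n with
  | zero =>
    simp only [traversals_zero, run_zero, outflow, inflow, Pi.zero_apply, ite_self,
      Finset.sum_const_zero, zero_add]
    exact if_congr eq_comm rfl rfl
  | succ n ih =>
    by_cases hd : (G.run o d n).1 = d
    · rwa [traversals_succ_of_eq G o d n hd, run_succ_of_eq G o d n hd]
    rw [traversals_succ_of_ne G o d n hd, run_succ_of_ne G o d n hd, outflow_add, inflow_add,
      outflow_edgeIndicator, inflow_edgeIndicator, step_fst]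
    split_ifs at ih ⊢ <;> omega

variable {G o d} {x : V → Bool → ℕ}

lemma traversals_active_edge_lt (hx : G.IsSwitchingFlow o d x) {n : ℕ}
    (hle : G.traversals o d n ≤ x) (hd : (G.run o d n).1 ≠ d) :
    G.traversals o d n (G.run o d n).1 ((G.run o d n).2 (G.run o d n).1) <
      x (G.run o d n).1 ((G.run o d n).2 (G.run o d n).1) := by
  by_contra! htight
  have hout := outflow_eq_of_le_of_eq_active (hx.2 _) (fun b => hle _ b)
    (traversals_false_eq G o d n _) (le_antisymm htight (hle _ _))
  have hcons := hx.1 (G.run o d n).1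
  have hrun := traversals_flow_conservation G o d n (G.run o d n).1
  have hin := G.inflow_mono hle (G.run o d n).1
  rw [if_neg hd] at hcons
  rw [if_pos rfl] at hrun
  omega

theorem traversals_le_of_isSwitchingFlow (hx : G.IsSwitchingFlow o d x) (n : ℕ) :
    G.traversals o d n ≤ x := by
  induction n with
  | zero => exact fun _ _ => Nat.zero_le _
  | succ n ih =>
    by_cases hd : (G.run o d n).1 = d
    · rwa [traversals_succ_of_eq G o d n hd]
    rw [traversals_succ_of_ne G o d n hd]
    intro v b
    simp only [Pi.add_apply, edgeIndicator]
    split_ifs with h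
    · obtain ⟨rfl, rfl⟩ := h
      exact traversals_active_edge_lt hx ih hd
    · exact ih v b

end Conservation

end SwitchGraph

theorem stmt17_general {V : Type} [Fintype V] [DecidableEq V] (G : SwitchGraph V) (o d : V)
    (N : ℕ)
    (x : V → Bool → ℕ) (hx : G.IsSwitchingFlow o d x) (hne : x ≠ G.traversals o d N) :
    (∑ v : V, ∑ b : Bool, G.traversals o d N v b) < ∑ v : V, ∑ b : Bool, x v b :=
  Fintype.sum_sum_lt_sum_sum (lt_of_le_of_ne (traversals_le_of_isSwitchingFlow hx N) hne.symm)

/-- Any switching flow distinct from the run profile has strictly larger total sum. -/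
theorem stmt17 {V : Type} [Fintype V] [DecidableEq V] (G : SwitchGraph V) (o d : V)
    (hod : o ≠ d) (N : ℕ) (hN : (G.run o d N).1 = d)
    (x : V → Bool → ℕ) (hx : G.IsSwitchingFlow o d x) (hne : x ≠ G.traversals o d N) :
    (∑ v : V, ∑ b : Bool, G.traversals o d N v b) < ∑ v : V, ∑ b : Bool, x v b :=
  stmt17_general G o d N x hx hne
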